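/- arXiv:1110.0139 — 3 statements merged into one kernel-verified Lean document; each statement's English description precedes it below -/
import Mathlib

section
/- Let (x_{n,m}) be a double sequence of real numbers and σ ∈ (0,1]. Then i(x_{n,m}; L) ≥ σ if and only if there exists a subset K ⊆ ℕ² with δ₋(K) ≥ σ such that the subsequence of (x_{n,m}) indexed by K converges to L (i.e., for every ε > 0 all but finitely many indices (n,m) ∈ K with both coordinates large satisfy |x_{n,m} − L| < ε). -/
open Filter Set MeasureTheory
open scoped Classical Pointwise

/-- Upper density of a subset of `ℕ²`. -/
noncomputable def upperDensity2 (K : Set (ℕ × ℕ)) : ℝ :=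
  limsup (fun n : ℕ =>
    ((((Finset.Icc 1 n) ×ˢ (Finset.Icc 1 n)).filter (fun p => p ∈ K)).card : ℝ) / (n : ℝ) ^ 2)
    atTop

/-- Lower density of a subset of `ℕ²`. -/
noncomputable def lowerDensity2 (K : Set (ℕ × ℕ)) : ℝ :=
  liminf (fun n : ℕ =>
    ((((Finset.Icc 1 n) ×ˢ (Finset.Icc 1 n)).filter (fun p => p ∈ K)).card : ℝ) / (n : ℝ) ^ 2)
    atTop

/-- Upper density of a subset of `ℕ`. -/
noncomputable def upperDensity1 (K : Set ℕ) : ℝ :=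
  limsup (fun n : ℕ =>
    (((Finset.Icc 1 n).filter (fun k => k ∈ K)).card : ℝ) / (n : ℝ)) atTop

/-- Lower density of a subset of `ℕ`. -/
noncomputable def lowerDensity1 (K : Set ℕ) : ℝ :=
  liminf (fun n : ℕ =>
    (((Finset.Icc 1 n).filter (fun k => k ∈ K)).card : ℝ) / (n : ℝ)) atTop

/-- Index of convergence of a double sequence to `L ∈ ℝ`. -/
noncomputable def idx2 (x : ℕ → ℕ → ℝ) (L : ℝ) : ℝ :=
  1 - ⨆ ε > (0 : ℝ), upperDensity2 {p | x p.1 p.2 ∉ Set.Ioo (L - ε) (L + ε)}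

/-- Index of convergence of a double sequence to a set `A ⊆ ℝ`. -/
noncomputable def idxSet2 (x : ℕ → ℕ → ℝ) (A : Set ℝ) : ℝ :=
  1 - ⨆ ε > (0 : ℝ), upperDensity2 {p | x p.1 p.2 ∉ A + Set.Ioo (-ε) ε}

/-- Index of convergence of a sequence to `L ∈ ℝ`. -/
noncomputable def idx1 (x : ℕ → ℝ) (L : ℝ) : ℝ :=
  1 - ⨆ ε > (0 : ℝ), upperDensity1 {n | x n ∉ Set.Ioo (L - ε) (L + ε)}

/-- Index of convergence of a sequence to a set `A ⊆ ℝ`. -/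
noncomputable def idxSet1 (x : ℕ → ℝ) (A : Set ℝ) : ℝ :=
  1 - ⨆ ε > (0 : ℝ), upperDensity1 {n | x n ∉ A + Set.Ioo (-ε) ε}

/-- `K ⊆ ℕ` has natural density `a`. -/
def HasDensity1 (K : Set ℕ) (a : ℝ) : Prop :=
  Tendsto (fun n : ℕ =>
    (((Finset.Icc 1 n).filter (fun k => k ∈ K)).card : ℝ) / (n : ℝ)) atTop (nhds a)

/-- `K ⊆ ℕ²` has natural density `a`. -/
def HasDensity2 (K : Set (ℕ × ℕ)) (a : ℝ) : Prop :=
  Tendsto (fun n : ℕ =>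
    ((((Finset.Icc 1 n) ×ˢ (Finset.Icc 1 n)).filter (fun p => p ∈ K)).card : ℝ) / (n : ℝ) ^ 2)
    atTop (nhds a)

/-- A set `A ⊆ ℝ` is Peano–Jordan measurable. -/
def JordanMeasurable1 (A : Set ℝ) : Prop :=
  Bornology.IsBounded A ∧ volume (frontier A) = 0

/-- The Peano–Jordan measure of a Jordan measurable `A ⊆ ℝ`. -/
noncomputable def jordanMeasure1 (A : Set ℝ) : ℝ := (volume A).toReal

/-- A set `A ⊆ ℝ²` is Peano–Jordan measurable. -/
def JordanMeasurable2 (A : Set (ℝ × ℝ)) : Prop :=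
  Bornology.IsBounded A ∧ volume (frontier A) = 0

/-- The Peano–Jordan measure of a Jordan measurable `A ⊆ ℝ²`. -/
noncomputable def jordanMeasure2 (A : Set (ℝ × ℝ)) : ℝ := (volume A).toReal

/-!
Write `B ε` for the set of indices with `|x n m - L| < ε`. Since the lower density of a
complement is one minus the upper density, `σ ≤ i(x; L)` says exactly that every `B ε` has lower
density at least `σ`. A set `K` along which `x` tends to `L` lies inside `B ε` up to a strip
`{n < N} ∪ {m < N}`, which has density zero; hence `B ε` inherits the lower density of `K`.
Conversely, the sets `B (1 / (j + 1))` are glued diagonally: `K` takes the points with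
`max n m = k` from `B (1 / (φ k + 1))`, where `φ → ∞` slowly enough that `B (1 / (φ n + 1))`
still fills almost a `σ`-fraction of the box `[1, n]²`. As `φ` is monotone and the `B ε` shrink
with `ε`, `K ∩ [1, n]²` contains `B (1 / (φ n + 1)) ∩ [1, n]²`.
-/

open Topology

theorem Nat.exists_monotone_tendsto_eventually_diagonal {P : ℕ → ℕ → Prop}
    (h : ∀ j, ∀ᶠ n in atTop, P j n) :
    ∃ φ : ℕ → ℕ, Monotone φ ∧ Tendsto φ atTop atTop ∧ ∀ᶠ n in atTop, P (φ n) n := by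
  let Q j n := ∀ i ≤ j, ∀ m ≥ n, P i m
  have hQ : ∀ j, ∀ᶠ n in atTop, j ≤ n ∧ Q j n := fun j =>
    (eventually_ge_atTop j).and <| (Set.finite_Iic j).eventually_all.2 fun i _ =>
      eventually_forall_ge_atTop.2 (h i)
  refine ⟨fun n => Nat.findGreatest (Q · n) n, fun a b hab => ?_, ?_, ?_⟩
  · exact Nat.findGreatest_mono (fun j hj i hi m hm => hj i hi m (hab.trans hm)) hab
  · exact tendsto_atTop.2 fun j => (hQ j).mono fun n hn => Nat.le_findGreatest hn.1 hn.2
  · exact (hQ 0).mono fun n hn =>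
      Nat.findGreatest_spec (P := (Q · n)) (zero_le n) hn.2 _ le_rfl n le_rfl

def box (n : ℕ) : Finset (ℕ × ℕ) := Finset.Icc 1 n ×ˢ Finset.Icc 1 n

noncomputable def boxRatio (K : Set (ℕ × ℕ)) (n : ℕ) : ℝ :=
  (((box n).filter (· ∈ K)).card : ℝ) / (n : ℝ) ^ 2

theorem upperDensity2_eq_limsup (K : Set (ℕ × ℕ)) :
    upperDensity2 K = limsup (boxRatio K) atTop := rfl

theorem lowerDensity2_eq_liminf (K : Set (ℕ × ℕ)) :
    lowerDensity2 K = liminf (boxRatio K) atTop := rfl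

theorem card_box (n : ℕ) : (box n).card = n ^ 2 := by
  simp [box, sq]

theorem boxRatio_nonneg (K : Set (ℕ × ℕ)) (n : ℕ) : 0 ≤ boxRatio K n := by
  unfold boxRatio; positivity

theorem boxRatio_le_one (K : Set (ℕ × ℕ)) (n : ℕ) : boxRatio K n ≤ 1 := by
  unfold boxRatio
  apply div_le_one_of_le₀ _ (by positivity)
  exact_mod_cast (Finset.card_filter_le _ _).trans (card_box n).le

theorem boxRatio_mono {A B : Set (ℕ × ℕ)} (h : A ⊆ B) (n : ℕ) : boxRatio A n ≤ boxRatio B n := by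
  unfold boxRatio
  gcongr

theorem boxRatio_union_le (A B : Set (ℕ × ℕ)) (n : ℕ) :
    boxRatio (A ∪ B) n ≤ boxRatio A n + boxRatio B n := by
  unfold boxRatio
  rw [← add_div]
  gcongr
  simp only [Set.mem_union, Finset.filter_or]
  exact_mod_cast Finset.card_union_le _ _

theorem boxRatio_compl (K : Set (ℕ × ℕ)) {n : ℕ} (hn : n ≠ 0) :
    boxRatio Kᶜ n = 1 - boxRatio K n := by
  have hcard := Finset.card_filter_add_card_filter_not (s := box n) (· ∈ K)
  rw [card_box] at hcard
  unfold boxRatio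
  rw [eq_sub_iff_add_eq, ← add_div, div_eq_one_iff_eq (by positivity), add_comm]
  simp only [Set.mem_compl_iff]
  exact_mod_cast hcard

theorem boxRatio_le_of_inter_subset {A B : Set (ℕ × ℕ)} {n : ℕ}
    (h : A ∩ {p | max p.1 p.2 ≤ n} ⊆ B) : boxRatio A n ≤ boxRatio B n := by
  unfold boxRatio
  refine div_le_div_of_nonneg_right ?_ (by positivity)
  refine Nat.cast_le.2 (Finset.card_le_card fun p hp => ?_)
  simp only [box, Finset.mem_filter, Finset.mem_product, Finset.mem_Icc] at hp ⊢
  exact ⟨hp.1, h ⟨hp.2, max_le hp.1.1.2 hp.1.2.2⟩⟩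

theorem boxRatio_fst_lt_or_snd_lt_le (N n : ℕ) :
    boxRatio {p | p.1 < N ∨ p.2 < N} n ≤ 2 * N / n := by
  rcases Nat.eq_zero_or_pos n with rfl | hn
  · simp [boxRatio]
  have hn' : (0 : ℝ) < n := by exact_mod_cast hn
  calc boxRatio {p | p.1 < N ∨ p.2 < N} n ≤ (2 * N * n : ℝ) / n ^ 2 := by
        unfold boxRatio
        gcongr
        norm_cast
        refine (Finset.card_le_card
          (t := Finset.range N ×ˢ Finset.Icc 1 n ∪ Finset.Icc 1 n ×ˢ Finset.range N) ?_).trans ?_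
        · intro p
          simp only [box, Finset.mem_filter, Finset.mem_union, Finset.mem_product,
            Finset.mem_Icc, Finset.mem_range, Set.mem_ofPred_eq]
          tauto
        · refine (Finset.card_union_le _ _).trans_eq ?_
          simp only [Finset.card_product, Finset.card_range, Nat.card_Icc, add_tsub_cancel_right]
          ring
    _ = 2 * N / n := by field_simp

theorem isBoundedUnder_le_boxRatio (K : Set (ℕ × ℕ)) :
    IsBoundedUnder (· ≤ ·) atTop (boxRatio K) :=
  isBoundedUnder_of ⟨1, boxRatio_le_one K⟩

theorem isBoundedUnder_ge_boxRatio (K : Set (ℕ × ℕ)) :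
    IsBoundedUnder (· ≥ ·) atTop (boxRatio K) :=
  isBoundedUnder_of ⟨0, boxRatio_nonneg K⟩

theorem upperDensity2_nonneg (K : Set (ℕ × ℕ)) : 0 ≤ upperDensity2 K :=
  le_limsup_of_frequently_le (Frequently.of_forall (boxRatio_nonneg K))
    (isBoundedUnder_le_boxRatio K)

theorem upperDensity2_le_one (K : Set (ℕ × ℕ)) : upperDensity2 K ≤ 1 :=
  limsup_le_of_le (isBoundedUnder_ge_boxRatio K).isCoboundedUnder_le
    (Eventually.of_forall (boxRatio_le_one K))

theorem lowerDensity2_compl (K : Set (ℕ × ℕ)) : lowerDensity2 Kᶜ = 1 - upperDensity2 K := by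
  rw [lowerDensity2_eq_liminf, upperDensity2_eq_limsup, ← liminf_const_sub _ _ _
    (isBoundedUnder_le_boxRatio K) (isBoundedUnder_ge_boxRatio K).isCoboundedUnder_le]
  exact liminf_congr ((eventually_ne_atTop 0).mono fun n hn => boxRatio_compl K hn)

theorem lowerDensity2_le_of_subset_union {K B S : Set (ℕ × ℕ)} (h : K ⊆ S ∪ B) :
    lowerDensity2 K ≤ upperDensity2 S + lowerDensity2 B :=
  calc liminf (boxRatio K) atTop ≤ liminf (boxRatio S + boxRatio B) atTop :=
        liminf_le_liminf (Eventually.of_forall fun n =>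
          (boxRatio_mono h n).trans (boxRatio_union_le S B n))
          (isBoundedUnder_ge_boxRatio K)
          (isBoundedUnder_le_add (isBoundedUnder_le_boxRatio S)
            (isBoundedUnder_le_boxRatio B)).isCoboundedUnder_ge
    _ ≤ limsup (boxRatio S) atTop + liminf (boxRatio B) atTop :=
        liminf_add_le (isBoundedUnder_ge_boxRatio S) (isBoundedUnder_le_boxRatio S)
          (isBoundedUnder_ge_boxRatio B) (isBoundedUnder_le_boxRatio B).isCoboundedUnder_ge

theorem upperDensity2_fst_lt_or_snd_lt (N : ℕ) : upperDensity2 {p | p.1 < N ∨ p.2 < N} = 0 := by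
  refine Tendsto.limsup_eq (tendsto_of_tendsto_of_tendsto_of_le_of_le tendsto_const_nhds
    (tendsto_const_div_atTop_nhds_zero_nat (2 * N : ℝ)) (boxRatio_nonneg _) ?_)
  exact boxRatio_fst_lt_or_snd_lt_le N

theorem le_idx2_iff {x : ℕ → ℕ → ℝ} {L σ : ℝ} :
    σ ≤ idx2 x L ↔ ∀ ε > 0, σ ≤ lowerDensity2 {p | |x p.1 p.2 - L| < ε} := by
  have hcompl (ε : ℝ) : {p : ℕ × ℕ | |x p.1 p.2 - L| < ε} =
      {p | x p.1 p.2 ∉ Set.Ioo (L - ε) (L + ε)}ᶜ := by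
    ext p
    simp only [mem_ofPred_eq, mem_compl_iff, mem_Ioo, not_not, abs_sub_lt_iff]
    constructor <;> intro h <;> constructor <;> linarith [h.1, h.2]
  simp only [hcompl, lowerDensity2_compl, idx2]
  have hbdd : BddAbove (range fun ε : ℝ =>
      ⨆ _ : ε > 0, upperDensity2 {p | x p.1 p.2 ∉ Set.Ioo (L - ε) (L + ε)}) :=
    ⟨1, forall_mem_range.2 fun ε => Real.iSup_le (fun _ => upperDensity2_le_one _) zero_le_one⟩
  constructor
  · intro h ε hε
    refine h.trans (sub_le_sub_left ?_ 1)
    simpa only [ciSup_pos hε] using le_ciSup hbdd ε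
  · intro h
    have hσ : σ ≤ 1 := (h 1 one_pos).trans (sub_le_self _ (upperDensity2_nonneg _))
    exact le_sub_comm.1 (Real.iSup_le (fun ε => Real.iSup_le (fun hε => le_sub_comm.1 (h ε hε))
      (sub_nonneg.2 hσ)) (sub_nonneg.2 hσ))

theorem exists_le_lowerDensity2_eventually_mem {B : ℕ → Set (ℕ × ℕ)} (hB : Antitone B) {σ : ℝ}
    (hσ : ∀ j, σ ≤ lowerDensity2 (B j)) :
    ∃ K, σ ≤ lowerDensity2 K ∧ ∀ j, ∃ N, ∀ p ∈ K, N ≤ max p.1 p.2 → p ∈ B j := by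
  have hev (j : ℕ) : ∀ᶠ n in atTop, σ - 1 / ((j : ℝ) + 1) < boxRatio (B j) n :=
    eventually_lt_of_lt_liminf ((sub_lt_self σ Nat.one_div_pos_of_nat).trans_le (hσ j))
      (isBoundedUnder_ge_boxRatio _)
  obtain ⟨φ, hφ, hφ_tendsto, hφ_ev⟩ := Nat.exists_monotone_tendsto_eventually_diagonal hev
  refine ⟨{p | p ∈ B (φ (max p.1 p.2))}, ?_, fun j => ?_⟩
  · have hlim : Tendsto (fun n => σ - 1 / ((φ n : ℝ) + 1)) atTop (𝓝 σ) := by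
      simpa using (tendsto_one_div_add_atTop_nhds_zero_nat.comp hφ_tendsto).const_sub σ
    rw [lowerDensity2_eq_liminf, ← hlim.liminf_eq]
    refine liminf_le_liminf (hφ_ev.mono fun n hn => hn.le.trans (boxRatio_le_of_inter_subset ?_))
      hlim.isBoundedUnder_ge (isBoundedUnder_le_boxRatio _).isCoboundedUnder_ge
    rintro p ⟨hp, hpn⟩
    exact hB (hφ hpn) hp
  · obtain ⟨N, hN⟩ := eventually_atTop.1 (tendsto_atTop.1 hφ_tendsto j)
    exact ⟨N, fun p hp hpN => hB (hN _ hpN) hp⟩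

theorem index_ge_iff_subsequence_general (x : ℕ → ℕ → ℝ) (L σ : ℝ) :
    σ ≤ idx2 x L ↔
      ∃ K : Set (ℕ × ℕ), σ ≤ lowerDensity2 K ∧
        ∀ ε > (0 : ℝ), ∃ N : ℕ, ∀ p ∈ K, N ≤ p.1 → N ≤ p.2 → |x p.1 p.2 - L| < ε := by
  rw [le_idx2_iff]
  constructor
  · intro h
    obtain ⟨K, hK, hKB⟩ := exists_le_lowerDensity2_eventually_mem
      (B := fun j => {p | |x p.1 p.2 - L| < 1 / ((j : ℝ) + 1)})
      (fun i j hij => ofPred_subset_ofPred.2 fun p hp => hp.trans_le (Nat.one_div_le_one_div hij))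
      (fun j => h _ Nat.one_div_pos_of_nat)
    refine ⟨K, hK, fun ε hε => ?_⟩
    obtain ⟨j, hj⟩ := exists_nat_one_div_lt hε
    obtain ⟨N, hN⟩ := hKB j
    exact ⟨N, fun p hp hpN _ => (hN p hp (le_max_of_le_left hpN)).trans hj⟩
  · rintro ⟨K, hK, hconv⟩ ε hε
    obtain ⟨N, hN⟩ := hconv ε hε
    have hsub : K ⊆ {p | p.1 < N ∨ p.2 < N} ∪ {p | |x p.1 p.2 - L| < ε} :=
      fun p hp => or_iff_not_imp_left.2 fun hstrip => by
        obtain ⟨h1, h2⟩ := not_or.1 hstrip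
        exact hN p hp (not_lt.1 h1) (not_lt.1 h2)
    simpa only [upperDensity2_fst_lt_or_snd_lt, zero_add] using
      hK.trans (lowerDensity2_le_of_subset_union hsub)

theorem index_ge_iff_subsequence (x : ℕ → ℕ → ℝ) (L σ : ℝ) (hσ : σ ∈ Set.Ioc (0 : ℝ) 1) :
    σ ≤ idx2 x L ↔
      ∃ K : Set (ℕ × ℕ), σ ≤ lowerDensity2 K ∧
        ∀ ε > (0 : ℝ), ∃ N : ℕ, ∀ p ∈ K, N ≤ p.1 → N ≤ p.2 → |x p.1 p.2 - L| < ε :=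
  index_ge_iff_subsequence_general x L σ
end

section
/- If a double sequence (x_{n,m}) has indices of convergence α_k to pairwise distinct points L_k (k ≥ 1, possibly ±∞) with Σ_k α_k = 1, then for every limit L different from all L_k, the index of convergence of (x_{n,m}) to L is 0. -/
open Filter Set MeasureTheory
open scoped Classical Pointwise

/-- Index of convergence of a double sequence to a point of `[-∞,∞]`. -/
noncomputable def idx2E (x : ℕ → ℕ → ℝ) (L : EReal) : ℝ :=
  if L = ⊤ then 1 - ⨆ M : ℝ, upperDensity2 {p | ¬ x p.1 p.2 ≤ M}
  else if L = ⊥ then 1 - ⨆ M : ℝ, upperDensity2 {p | ¬ M ≤ x p.1 p.2}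
  else idx2 x L.toReal

/-!
Indices of convergence to distinct points of `[-∞, ∞]` add up to at most `1`. Finitely many
distinct points have pairwise disjoint neighbourhoods, and the index to a point is at most the
lower density of the set of indices where the sequence lies in the chosen neighbourhood; lower
density is superadditive on disjoint sets and at most `1`. Applied to `M` together with the
`L k`, `k ∈ F`, this gives `idx2E x M + ∑ k ∈ F, α k ≤ 1` for every finite `F`, and letting `F`
grow, `idx2E x M ≤ 1 - ∑' k, α k = 0`.
-/

open Topology

namespace Density2

def box (n : ℕ) : Finset (ℕ × ℕ) := Finset.Icc 1 n ×ˢ Finset.Icc 1 n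

noncomputable def countRatio (K : Set (ℕ × ℕ)) (n : ℕ) : ℝ :=
  ((box n).filter (fun p => p ∈ K)).card / (n : ℝ) ^ 2

lemma card_box (n : ℕ) : (box n).card = n ^ 2 := by
  simp [box, sq]

lemma countRatio_nonneg (K : Set (ℕ × ℕ)) (n : ℕ) : 0 ≤ countRatio K n := by
  unfold countRatio; positivity

lemma countRatio_le_one (K : Set (ℕ × ℕ)) (n : ℕ) : countRatio K n ≤ 1 := by
  unfold countRatio
  apply div_le_one_of_le₀ _ (by positivity)
  exact_mod_cast (card_box n).symm ▸ Finset.card_filter_le _ _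

lemma countRatio_mono {A B : Set (ℕ × ℕ)} (h : A ⊆ B) (n : ℕ) :
    countRatio A n ≤ countRatio B n := by
  unfold countRatio
  gcongr

lemma countRatio_union {A B : Set (ℕ × ℕ)} (h : Disjoint A B) (n : ℕ) :
    countRatio (A ∪ B) n = countRatio A n + countRatio B n := by
  unfold countRatio
  simp only [Set.mem_union]
  rw [← add_div, Finset.filter_or, Finset.card_union_of_disjoint
    (Finset.disjoint_filter.2 fun _ _ hA => Set.disjoint_left.1 h hA), Nat.cast_add]

lemma countRatio_compl (K : Set (ℕ × ℕ)) {n : ℕ} (hn : n ≠ 0) :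
    countRatio Kᶜ n = 1 - countRatio K n := by
  have hK := countRatio_union (disjoint_compl_right (a := K)) n
  rw [Set.union_compl_self] at hK
  have huniv : countRatio Set.univ n = 1 := by
    simp [countRatio, card_box, hn]
  linarith

@[simp]
lemma countRatio_empty (n : ℕ) : countRatio ∅ n = 0 := by
  simp [countRatio]

lemma isBoundedUnder_le_countRatio (K : Set (ℕ × ℕ)) :
    IsBoundedUnder (· ≤ ·) atTop (countRatio K) :=
  isBoundedUnder_of ⟨1, countRatio_le_one K⟩

lemma isBoundedUnder_ge_countRatio (K : Set (ℕ × ℕ)) :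
    IsBoundedUnder (· ≥ ·) atTop (countRatio K) :=
  isBoundedUnder_of ⟨0, countRatio_nonneg K⟩

lemma upperDensity2_eq_limsup (K : Set (ℕ × ℕ)) :
    upperDensity2 K = limsup (countRatio K) atTop := rfl

lemma lowerDensity2_eq_liminf (K : Set (ℕ × ℕ)) :
    lowerDensity2 K = liminf (countRatio K) atTop := rfl

lemma upperDensity2_mono {A B : Set (ℕ × ℕ)} (h : A ⊆ B) : upperDensity2 A ≤ upperDensity2 B :=
  limsup_le_limsup (.of_forall (countRatio_mono h))
    (isBoundedUnder_ge_countRatio A).isCoboundedUnder_flip (isBoundedUnder_le_countRatio B)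

lemma upperDensity2_le_one (K : Set (ℕ × ℕ)) : upperDensity2 K ≤ 1 :=
  limsup_le_of_le (isBoundedUnder_ge_countRatio K).isCoboundedUnder_flip
    (.of_forall (countRatio_le_one K))

lemma lowerDensity2_le_one (K : Set (ℕ × ℕ)) : lowerDensity2 K ≤ 1 :=
  (liminf_le_limsup (isBoundedUnder_le_countRatio K) (isBoundedUnder_ge_countRatio K)).trans
    (upperDensity2_le_one K)

lemma lowerDensity2_eq_one_sub_upperDensity2_compl (K : Set (ℕ × ℕ)) :
    lowerDensity2 K = 1 - upperDensity2 Kᶜ := by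
  have hanti : Antitone fun t : ℝ => 1 - t := fun _ _ h => sub_le_sub_left h 1
  rw [lowerDensity2_eq_liminf, upperDensity2_eq_limsup, hanti.map_limsup_of_continuousAt _
    (continuous_const.sub continuous_id).continuousAt (isBoundedUnder_le_countRatio _)
    (isBoundedUnder_ge_countRatio _).isCoboundedUnder_flip]
  refine liminf_congr ((eventually_ne_atTop 0).mono fun n hn => ?_)
  simp [countRatio_compl K hn]

lemma lowerDensity2_add_le_union {A B : Set (ℕ × ℕ)} (h : Disjoint A B) :
    lowerDensity2 A + lowerDensity2 B ≤ lowerDensity2 (A ∪ B) := by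
  simp only [lowerDensity2_eq_liminf, funext (countRatio_union h)]
  exact le_liminf_add (isBoundedUnder_ge_countRatio A) (isBoundedUnder_le_countRatio A)
    (isBoundedUnder_ge_countRatio B) (isBoundedUnder_le_countRatio B).isCoboundedUnder_flip

lemma sum_lowerDensity2_le_lowerDensity2_biUnion {ι : Type*} (s : Finset ι) {G : ι → Set (ℕ × ℕ)}
    (hG : (s : Set ι).PairwiseDisjoint G) :
    ∑ i ∈ s, lowerDensity2 (G i) ≤ lowerDensity2 (⋃ i ∈ s, G i) := by
  induction s using Finset.induction_on with
  | empty => simp [lowerDensity2_eq_liminf, funext countRatio_empty]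
  | insert a s ha ih =>
    rw [Finset.coe_insert, Set.pairwiseDisjoint_insert] at hG
    rw [Finset.sum_insert ha, Finset.set_biUnion_insert]
    have hdisj : Disjoint (G a) (⋃ i ∈ s, G i) :=
      Set.disjoint_iUnion₂_right.2 fun i hi => hG.2 i hi (ne_of_mem_of_not_mem hi ha).symm
    linarith [ih hG.1, lowerDensity2_add_le_union hdisj]

lemma iSup_upperDensity2_le_one {ι : Sort*} (K : ι → Set (ℕ × ℕ)) :
    ⨆ i, upperDensity2 (K i) ≤ 1 :=
  Real.iSup_le (fun i => upperDensity2_le_one (K i)) zero_le_one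

lemma bddAbove_range_upperDensity2 {ι : Sort*} (K : ι → Set (ℕ × ℕ)) :
    BddAbove (Set.range fun i => upperDensity2 (K i)) :=
  ⟨1, Set.forall_mem_range.2 fun i => upperDensity2_le_one (K i)⟩

end Density2

open Density2

lemma idx2E_nonneg (x : ℕ → ℕ → ℝ) (ℓ : EReal) : 0 ≤ idx2E x ℓ := by
  unfold idx2E idx2
  split_ifs
  · linarith [iSup_upperDensity2_le_one fun M : ℝ => {p | ¬ x p.1 p.2 ≤ M}]
  · linarith [iSup_upperDensity2_le_one fun M : ℝ => {p | ¬ M ≤ x p.1 p.2}]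
  · have := Real.iSup_le (fun ε : ℝ => iSup_upperDensity2_le_one fun _ : ε > 0 =>
      {p | x p.1 p.2 ∉ Set.Ioo (ℓ.toReal - ε) (ℓ.toReal + ε)}) zero_le_one
    linarith

/-- The filter along which `idx2E x ℓ` measures convergence. Beware that `idx2E x ⊤` measures
concentration on the rays `(-∞, M]`, so it belongs with `atBot`, and `idx2E x ⊥` with `atTop`. -/
noncomputable def idxNhds (ℓ : EReal) : Filter ℝ :=
  if ℓ = ⊤ then atBot else if ℓ = ⊥ then atTop else 𝓝 ℓ.toReal

lemma idxNhds_disjoint {ℓ ℓ' : EReal} (h : ℓ ≠ ℓ') : Disjoint (idxNhds ℓ) (idxNhds ℓ') := by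
  induction ℓ using EReal.rec <;> induction ℓ' using EReal.rec <;>
    simp_all [idxNhds, disjoint_atBot_atTop, disjoint_atBot_atTop.symm,
      fun a : ℝ => (disjoint_nhds_atTop a).symm, fun a : ℝ => (disjoint_nhds_atBot a).symm]

lemma idx2E_le_lowerDensity2 (x : ℕ → ℕ → ℝ) {ℓ : EReal} {U : Set ℝ} (hU : U ∈ idxNhds ℓ) :
    idx2E x ℓ ≤ lowerDensity2 {p | x p.1 p.2 ∈ U} := by
  rw [lowerDensity2_eq_one_sub_upperDensity2_compl, le_sub_comm]
  unfold idx2E idxNhds at *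
  split_ifs at hU ⊢
  · obtain ⟨a, ha⟩ := mem_atBot_sets.1 hU
    rw [sub_sub_cancel]
    calc upperDensity2 {p | x p.1 p.2 ∈ U}ᶜ ≤ upperDensity2 {p | ¬ x p.1 p.2 ≤ a} :=
          upperDensity2_mono fun p hp hle => hp (ha _ hle)
      _ ≤ _ := le_ciSup (bddAbove_range_upperDensity2 fun M : ℝ => {p | ¬ x p.1 p.2 ≤ M}) a
  · obtain ⟨a, ha⟩ := mem_atTop_sets.1 hU
    rw [sub_sub_cancel]
    calc upperDensity2 {p | x p.1 p.2 ∈ U}ᶜ ≤ upperDensity2 {p | ¬ a ≤ x p.1 p.2} :=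
          upperDensity2_mono fun p hp hle => hp (ha _ hle)
      _ ≤ _ := le_ciSup (bddAbove_range_upperDensity2 fun M : ℝ => {p | ¬ M ≤ x p.1 p.2}) a
  · obtain ⟨ε, hε, hball⟩ := Metric.mem_nhds_iff.1 hU
    rw [Real.ball_eq_Ioo] at hball
    rw [idx2, sub_sub_cancel]
    calc upperDensity2 {p | x p.1 p.2 ∈ U}ᶜ
        ≤ upperDensity2 {p | x p.1 p.2 ∉ Set.Ioo (ℓ.toReal - ε) (ℓ.toReal + ε)} :=
          upperDensity2_mono fun p hp hmem => hp (hball hmem)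
      _ ≤ _ := le_ciSup_of_le ⟨1, Set.forall_mem_range.2 fun ε' => iSup_upperDensity2_le_one _⟩
          ε (by rw [ciSup_pos hε])

theorem sum_idx2E_le_one (x : ℕ → ℕ → ℝ) (S : Finset EReal) : ∑ ℓ ∈ S, idx2E x ℓ ≤ 1 := by
  obtain ⟨U, hU, hUdisj⟩ := Set.PairwiseDisjoint.exists_mem_filter
    (fun ℓ _ ℓ' _ h => idxNhds_disjoint h : (S : Set EReal).PairwiseDisjoint idxNhds)
    S.finite_toSet
  let G (ℓ : EReal) : Set (ℕ × ℕ) := {p | x p.1 p.2 ∈ U ℓ}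
  have hGdisj : (S : Set EReal).PairwiseDisjoint G :=
    fun ℓ hℓ ℓ' hℓ' h => (hUdisj hℓ hℓ' h).preimage _
  calc ∑ ℓ ∈ S, idx2E x ℓ ≤ ∑ ℓ ∈ S, lowerDensity2 (G ℓ) :=
        Finset.sum_le_sum fun ℓ _ => idx2E_le_lowerDensity2 x (hU ℓ)
    _ ≤ lowerDensity2 (⋃ ℓ ∈ S, G ℓ) := sum_lowerDensity2_le_lowerDensity2_biUnion S hGdisj
    _ ≤ 1 := lowerDensity2_le_one _

theorem index_other_limits_zero (x : ℕ → ℕ → ℝ) (L : ℕ → EReal)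
    (hL : Function.Injective L) (α : ℕ → ℝ) (hα : ∀ k, idx2E x (L k) = α k)
    (hsum : ∑' k : ℕ, α k = 1) (M : EReal) (hM : ∀ k, M ≠ L k) :
    idx2E x M = 0 := by
  have hfinite (F : Finset ℕ) : ∑ k ∈ F, α k ≤ 1 - idx2E x M := by
    have hMF : M ∉ F.image L := by simpa [eq_comm] using fun k _ => hM k
    have := sum_idx2E_le_one x (insert M (F.image L))
    rw [Finset.sum_insert hMF, Finset.sum_image hL.injOn] at this
    simp only [hα] at this
    linarith
  have htsum : ∑' k, α k ≤ 1 - idx2E x M :=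
    tsum_le_of_sum_le' (by simpa using hfinite ∅) hfinite
  linarith [idx2E_nonneg x M]
end

section
/- Let (x_n) be a sequence of reals and f : [0,1] → [0,1] an injective differentiable function with differentiable inverse such that i(x_n; A) = |f⁻¹(A)| for every Peano–Jordan measurable set A ⊆ [0,1]. Then for every interval I ⊆ [0,1], the set {n ∈ ℕ : x_n ∈ I} has a natural density equal to |f⁻¹(I)|. -/
/-!
Push the Lebesgue measure on `[0, 1]` forward along `f` to a probability measure `ν`: it is
carried by `[0, 1]`, it has no atoms because `f` is injective, and the hypothesis reads
`i(x_n; A) = ν(A)`. Since `i(x_n; A) ≤ δ₋({n : x_n ∈ A + (-ε, ε)})` for every `ε > 0`, and a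
compact set inside an open set `U` has a thickening inside `U`, every open `U` exhausted by
compact Jordan measurable sets satisfies `ν(U) ≤ δ₋({n : x_n ∈ U})`. An interval `I` lies between
`(a, b)` and `[a, b]`, which have the same `ν`-measure; the bound for `(a, b)` gives
`ν(I) ≤ δ₋({n : x_n ∈ I})`, and the bound for the complement of `[a, b]` gives
`δ⁺({n : x_n ∈ I}) ≤ 1 - ν([a, b]ᶜ) = ν(I)`.
-/

open Filter Set MeasureTheory
open scoped Classical Pointwise

open Metric

noncomputable def partialDensity (K : Set ℕ) (n : ℕ) : ℝ :=
  (((Finset.Icc 1 n).filter (fun k => k ∈ K)).card : ℝ) / (n : ℝ)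

lemma upperDensity1_eq_limsup (K : Set ℕ) :
    upperDensity1 K = limsup (partialDensity K) atTop := rfl

lemma lowerDensity1_eq_liminf (K : Set ℕ) :
    lowerDensity1 K = liminf (partialDensity K) atTop := rfl

lemma partialDensity_nonneg (K : Set ℕ) (n : ℕ) : 0 ≤ partialDensity K n := by
  unfold partialDensity; positivity

lemma partialDensity_le_one (K : Set ℕ) (n : ℕ) : partialDensity K n ≤ 1 := by
  unfold partialDensity
  rcases Nat.eq_zero_or_pos n with rfl | hn
  · simp
  · rw [div_le_one (by exact_mod_cast hn)]
    exact_mod_cast (Finset.card_filter_le _ _).trans (by simp)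

lemma partialDensity_mono {K L : Set ℕ} (h : K ⊆ L) (n : ℕ) :
    partialDensity K n ≤ partialDensity L n := by
  unfold partialDensity
  gcongr

lemma partialDensity_compl (K : Set ℕ) {n : ℕ} (hn : 1 ≤ n) :
    partialDensity Kᶜ n = 1 - partialDensity K n := by
  have hcard : ((Finset.Icc 1 n).filter (fun k => k ∈ K)).card
      + ((Finset.Icc 1 n).filter (fun k => k ∉ K)).card = n := by
    rw [Finset.card_filter_add_card_filter_not]
    simp
  unfold partialDensity
  simp only [mem_compl_iff]
  rw [eq_sub_iff_add_eq, ← add_div, div_eq_one_iff_eq (by positivity)]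
  exact_mod_cast (add_comm _ _).trans hcard

lemma isBoundedUnder_le_partialDensity (K : Set ℕ) :
    IsBoundedUnder (· ≤ ·) atTop (partialDensity K) :=
  isBoundedUnder_of ⟨1, partialDensity_le_one K⟩

lemma isBoundedUnder_ge_partialDensity (K : Set ℕ) :
    IsBoundedUnder (· ≥ ·) atTop (partialDensity K) :=
  isBoundedUnder_of ⟨0, partialDensity_nonneg K⟩

lemma upperDensity1_compl (K : Set ℕ) : upperDensity1 Kᶜ = 1 - lowerDensity1 K := by
  rw [upperDensity1_eq_limsup, lowerDensity1_eq_liminf,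
    ← limsup_const_sub _ _ _ (isBoundedUnder_le_partialDensity K).isCoboundedUnder_ge
      (isBoundedUnder_ge_partialDensity K)]
  refine limsup_congr ?_
  filter_upwards [eventually_ge_atTop 1] with n hn using partialDensity_compl K hn

lemma upperDensity1_mono {K L : Set ℕ} (h : K ⊆ L) : upperDensity1 K ≤ upperDensity1 L :=
  limsup_le_limsup (.of_forall (partialDensity_mono h))
    (isBoundedUnder_ge_partialDensity K).isCoboundedUnder_le (isBoundedUnder_le_partialDensity L)

lemma lowerDensity1_mono {K L : Set ℕ} (h : K ⊆ L) : lowerDensity1 K ≤ lowerDensity1 L :=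
  liminf_le_liminf (.of_forall (partialDensity_mono h))
    (isBoundedUnder_ge_partialDensity K) (isBoundedUnder_le_partialDensity L).isCoboundedUnder_ge

lemma upperDensity1_le_one (K : Set ℕ) : upperDensity1 K ≤ 1 :=
  limsup_le_of_le (isBoundedUnder_ge_partialDensity K).isCoboundedUnder_le
    (.of_forall (partialDensity_le_one K))

lemma lowerDensity1_le_upperDensity1 (K : Set ℕ) : lowerDensity1 K ≤ upperDensity1 K :=
  liminf_le_limsup (isBoundedUnder_le_partialDensity K) (isBoundedUnder_ge_partialDensity K)

lemma hasDensity1_of_upperDensity1_le_of_le_lowerDensity1 {K : Set ℕ} {a : ℝ}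
    (hupper : upperDensity1 K ≤ a) (hlower : a ≤ lowerDensity1 K) : HasDensity1 K a :=
  tendsto_of_liminf_eq_limsup
    (le_antisymm ((lowerDensity1_le_upperDensity1 K).trans hupper) hlower)
    (le_antisymm hupper (hlower.trans (lowerDensity1_le_upperDensity1 K)))
    (isBoundedUnder_le_partialDensity K) (isBoundedUnder_ge_partialDensity K)

lemma idxSet1_le_lowerDensity1_thickening (x : ℕ → ℝ) (A : Set ℝ) {ε : ℝ} (hε : 0 < ε) :
    idxSet1 x A ≤ lowerDensity1 {n | x n ∈ thickening ε A} := by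
  set g : ℝ → ℝ := fun e => ⨆ _ : e > 0, upperDensity1 {n | x n ∉ A + Ioo (-e) e}
  have hg : BddAbove (range g) :=
    ⟨1, forall_mem_range.2 fun e => Real.iSup_le (fun _ => upperDensity1_le_one _) zero_le_one⟩
  have hε_le : upperDensity1 {n | x n ∈ thickening ε A}ᶜ ≤ ⨆ e, g e := by
    rw [← add_ball_zero, Real.ball_eq_Ioo, zero_sub, zero_add]
    exact (ciSup_pos hε).symm.trans_le (le_ciSup hg ε)
  rw [upperDensity1_compl] at hε_le
  unfold idxSet1
  linarith

lemma jordanMeasurable1_Icc (a b : ℝ) : JordanMeasurable1 (Icc a b) := by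
  refine ⟨isBounded_Icc a b, ?_⟩
  rcases le_or_gt a b with hab | hab
  · rw [frontier_Icc hab]
    exact (toFinite _).measure_zero _
  · rw [Icc_eq_empty_of_lt hab, frontier_empty, measure_empty]

lemma JordanMeasurable1.union {A B : Set ℝ} (hA : JordanMeasurable1 A)
    (hB : JordanMeasurable1 B) : JordanMeasurable1 (A ∪ B) :=
  ⟨hA.1.union hB.1, measure_mono_null (frontier_union_subset A B |>.trans
    (union_subset_union inter_subset_left inter_subset_right)) (measure_union_null hA.2 hB.2)⟩

lemma JordanMeasurable1.inter {A B : Set ℝ} (hA : JordanMeasurable1 A)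
    (hB : JordanMeasurable1 B) : JordanMeasurable1 (A ∩ B) :=
  ⟨hA.1.subset inter_subset_left, measure_mono_null (frontier_inter_subset A B |>.trans
    (union_subset_union inter_subset_left inter_subset_right)) (measure_union_null hA.2 hB.2)⟩

lemma Set.OrdConnected.exists_Ioo_subset_subset_Icc {α : Type*}
    [ConditionallyCompleteLinearOrder α] [TopologicalSpace α] [OrderTopology α]
    [DenselyOrdered α] {I : Set α}
    (hI : I.OrdConnected) (hb : BddBelow I) (ha : BddAbove I) :
    ∃ a b, Ioo a b ⊆ I ∧ I ⊆ Icc a b := by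
  rcases I.eq_empty_or_nonempty with rfl | hne
  · exact ⟨sInf ∅, sInf ∅, by simp, empty_subset _⟩
  · exact ⟨sInf I, sSup I, IsConnected.Ioo_csInf_csSup_subset ⟨hne, hI.isPreconnected⟩ hb ha,
      subset_Icc_csInf_csSup hb ha⟩

section IndexBound

variable (x : ℕ → ℝ) (ν : Measure ℝ) [IsFiniteMeasure ν]

lemma measureReal_le_lowerDensity1_of_isOpen (h01 : ν (Icc 0 1)ᶜ = 0)
    (hidx : ∀ A ⊆ Icc (0 : ℝ) 1, IsCompact A → JordanMeasurable1 A → ν.real A ≤ idxSet1 x A)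
    {U : Set ℝ} (hU : IsOpen U) {K : ℕ → Set ℝ} (hKmono : Monotone K)
    (hKc : ∀ k, IsCompact (K k)) (hKJ : ∀ k, JordanMeasurable1 (K k)) (hKU : ∀ k, K k ⊆ U)
    (hcover : U ∩ Icc 0 1 ⊆ ⋃ k, K k) :
    ν.real U ≤ lowerDensity1 {n | x n ∈ U} := by
  have hconull : ∀ s, ν.real (s ∩ Icc 0 1) = ν.real s := fun s => by
    simp only [measureReal_def, measure_inter_conull h01]
  have hK : ∀ k, ν.real (K k) ≤ lowerDensity1 {n | x n ∈ U} := by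
    intro k
    obtain ⟨ε, hε, hεU⟩ := (hKc k).exists_thickening_subset_open hU (hKU k)
    calc ν.real (K k) = ν.real (K k ∩ Icc 0 1) := (hconull _).symm
      _ ≤ idxSet1 x (K k ∩ Icc 0 1) :=
        hidx _ inter_subset_right ((hKc k).inter_right isClosed_Icc)
          ((hKJ k).inter (jordanMeasurable1_Icc 0 1))
      _ ≤ lowerDensity1 {n | x n ∈ thickening ε (K k ∩ Icc 0 1)} :=
        idxSet1_le_lowerDensity1_thickening x _ hε
      _ ≤ lowerDensity1 {n | x n ∈ U} :=
        lowerDensity1_mono fun n hn => hεU (thickening_subset_of_subset ε inter_subset_left hn)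
  have hlim : Tendsto (fun k => ν.real (K k)) atTop (nhds (ν.real (⋃ k, K k))) :=
    (ENNReal.tendsto_toReal (measure_ne_top ν _)).comp (tendsto_measure_iUnion_atTop hKmono)
  calc ν.real U = ν.real (U ∩ Icc 0 1) := (hconull U).symm
    _ ≤ ν.real (⋃ k, K k) := measureReal_mono hcover
    _ ≤ lowerDensity1 {n | x n ∈ U} := le_of_tendsto' hlim hK

lemma measureReal_Ioo_le_lowerDensity1 (h01 : ν (Icc 0 1)ᶜ = 0)
    (hidx : ∀ A ⊆ Icc (0 : ℝ) 1, IsCompact A → JordanMeasurable1 A → ν.real A ≤ idxSet1 x A)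
    (a b : ℝ) : ν.real (Ioo a b) ≤ lowerDensity1 {n | x n ∈ Ioo a b} := by
  refine measureReal_le_lowerDensity1_of_isOpen x ν h01 hidx isOpen_Ioo
    (K := fun k : ℕ => Icc (a + 1 / (k + 1)) (b - 1 / (k + 1)))
    (fun k m hkm => Icc_subset_Icc (by gcongr) (by gcongr))
    (fun k => isCompact_Icc) (fun k => jordanMeasurable1_Icc _ _)
    (fun k => Icc_subset_Ioo (lt_add_of_pos_right a (by positivity))
      (sub_lt_self b (by positivity))) ?_
  rintro t ⟨⟨hat, htb⟩, -⟩
  obtain ⟨k, hk⟩ := exists_nat_one_div_lt (lt_min (sub_pos.2 hat) (sub_pos.2 htb))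
  refine mem_iUnion.2 ⟨k, ?_, ?_⟩
  · linarith [min_le_left (t - a) (b - t)]
  · linarith [min_le_right (t - a) (b - t)]

lemma measureReal_compl_Icc_le_lowerDensity1 (h01 : ν (Icc 0 1)ᶜ = 0)
    (hidx : ∀ A ⊆ Icc (0 : ℝ) 1, IsCompact A → JordanMeasurable1 A → ν.real A ≤ idxSet1 x A)
    (a b : ℝ) : ν.real (Icc a b)ᶜ ≤ lowerDensity1 {n | x n ∈ (Icc a b)ᶜ} := by
  refine measureReal_le_lowerDensity1_of_isOpen x ν h01 hidx isClosed_Icc.isOpen_compl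
    (K := fun k : ℕ => Icc 0 (a - 1 / (k + 1)) ∪ Icc (b + 1 / (k + 1)) 1)
    (fun k m hkm => union_subset_union (Icc_subset_Icc le_rfl (by gcongr))
      (Icc_subset_Icc (by gcongr) le_rfl))
    (fun k => isCompact_Icc.union isCompact_Icc)
    (fun k => (jordanMeasurable1_Icc _ _).union (jordanMeasurable1_Icc _ _)) ?_ ?_
  · intro k t ht ⟨hat, htb⟩
    have hδ : (0 : ℝ) < 1 / (k + 1) := by positivity
    rcases ht with ⟨-, ht⟩ | ⟨ht, -⟩ <;> linarith
  · rintro t ⟨hab, h0t, ht1⟩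
    rcases not_and_or.1 hab with hta | hbt
    · obtain ⟨k, hk⟩ := exists_nat_one_div_lt (sub_pos.2 (not_le.1 hta))
      exact mem_iUnion.2 ⟨k, Or.inl ⟨h0t, by linarith⟩⟩
    · obtain ⟨k, hk⟩ := exists_nat_one_div_lt (sub_pos.2 (not_le.1 hbt))
      exact mem_iUnion.2 ⟨k, Or.inr ⟨by linarith, ht1⟩⟩

theorem hasDensity1_of_ordConnected [IsProbabilityMeasure ν] [NullSingletonClass ν]
    (h01 : ν (Icc 0 1)ᶜ = 0)
    (hidx : ∀ A ⊆ Icc (0 : ℝ) 1, IsCompact A → JordanMeasurable1 A → ν.real A ≤ idxSet1 x A)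
    {I : Set ℝ} (hI : I ⊆ Icc 0 1) (hIc : I.OrdConnected) :
    HasDensity1 {n | x n ∈ I} (ν.real I) := by
  obtain ⟨a, b, hIoo, hIcc⟩ :=
    hIc.exists_Ioo_subset_subset_Icc (bddBelow_Icc.mono hI) (bddAbove_Icc.mono hI)
  have hIoo_eq : ν.real (Ioo a b) = ν.real (Icc a b) := measureReal_congr Ioo_ae_eq_Icc
  have hI_eq : ν.real I = ν.real (Icc a b) :=
    le_antisymm (measureReal_mono hIcc) (hIoo_eq ▸ measureReal_mono hIoo)
  refine hasDensity1_of_upperDensity1_le_of_le_lowerDensity1 ?_ ?_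
  · calc upperDensity1 {n | x n ∈ I}
        ≤ upperDensity1 {n | x n ∈ (Icc a b)ᶜ}ᶜ :=
          upperDensity1_mono fun n hn hc => hc (hIcc hn)
      _ = 1 - lowerDensity1 {n | x n ∈ (Icc a b)ᶜ} := upperDensity1_compl _
      _ ≤ 1 - ν.real (Icc a b)ᶜ :=
          sub_le_sub_left (measureReal_compl_Icc_le_lowerDensity1 x ν h01 hidx a b) 1
      _ = ν.real I := by rw [probReal_compl_eq_one_sub measurableSet_Icc, hI_eq, sub_sub_cancel]
  · calc ν.real I = ν.real (Ioo a b) := hI_eq.trans hIoo_eq.symm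
      _ ≤ lowerDensity1 {n | x n ∈ Ioo a b} := measureReal_Ioo_le_lowerDensity1 x ν h01 hidx a b
      _ ≤ lowerDensity1 {n | x n ∈ I} := lowerDensity1_mono fun n hn => hIoo hn

end IndexBound

namespace MeasureTheory.Measure

variable {α β : Type*} [MeasurableSpace α] [MeasurableSpace β] {μ : Measure α} {s : Set α}
  {f : α → β}

lemma map_restrict_compl_eq_zero (hs : MeasurableSet s) (hf : AEMeasurable f (μ.restrict s))
    {t : Set β} (ht : MeasurableSet t) (hmaps : MapsTo f s t) :
    (μ.restrict s).map f tᶜ = 0 := by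
  rw [map_apply_of_aemeasurable hf ht.compl, restrict_apply' hs]
  exact measure_mono_null (fun u hu => hu.1 (hmaps hu.2)) measure_empty

lemma nullSingletonClass_map_restrict [MeasurableSingletonClass β] [NullSingletonClass μ]
    (hs : MeasurableSet s) (hf : AEMeasurable f (μ.restrict s)) (hinj : InjOn f s) :
    NullSingletonClass ((μ.restrict s).map f) := by
  refine ⟨fun p => ?_⟩
  rw [map_apply_of_aemeasurable hf (measurableSet_singleton p), restrict_apply' hs]
  exact Subsingleton.measure_zero (fun u hu v hv => hinj hu.2 hv.2 (hu.1.trans hv.1.symm)) μ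

end MeasureTheory.Measure

theorem density_on_intervals_general (x : ℕ → ℝ) (f : ℝ → ℝ)
    (hmaps : Set.MapsTo f (Set.Icc 0 1) (Set.Icc 0 1))
    (hinj : Set.InjOn f (Set.Icc 0 1))
    (hdf : DifferentiableOn ℝ f (Set.Icc 0 1))
    (hidx : ∀ A ⊆ Set.Icc (0 : ℝ) 1, JordanMeasurable1 A →
      idxSet1 x A = jordanMeasure1 (Set.Icc 0 1 ∩ f ⁻¹' A)) :
    ∀ I ⊆ Set.Icc (0 : ℝ) 1, I.OrdConnected →
      HasDensity1 {n | x n ∈ I} (jordanMeasure1 (Set.Icc 0 1 ∩ f ⁻¹' I)) := by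
  intro I hI hIc
  set ν : Measure ℝ := (volume.restrict (Icc 0 1)).map f
  have hf : AEMeasurable f (volume.restrict (Icc 0 1)) :=
    hdf.continuousOn.aemeasurable measurableSet_Icc
  have hν : ∀ A, MeasurableSet A → ν.real A = jordanMeasure1 (Icc 0 1 ∩ f ⁻¹' A) := fun A hA => by
    rw [measureReal_def, Measure.map_apply_of_aemeasurable hf hA,
      Measure.restrict_apply' measurableSet_Icc, inter_comm, jordanMeasure1]
  have : IsProbabilityMeasure (volume.restrict (Icc (0 : ℝ) 1)) := ⟨by simp⟩
  have : IsProbabilityMeasure ν := Measure.isProbabilityMeasure_map hf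
  have : NullSingletonClass ν := Measure.nullSingletonClass_map_restrict measurableSet_Icc hf hinj
  rw [← hν I hIc.measurableSet]
  exact hasDensity1_of_ordConnected x ν
    (Measure.map_restrict_compl_eq_zero measurableSet_Icc hf measurableSet_Icc hmaps)
    (fun A hA hAc hAJ => (hν A hAc.measurableSet).trans_le (hidx A hA hAJ).ge) hI hIc

theorem density_on_intervals (x : ℕ → ℝ) (f finv : ℝ → ℝ)
    (hmaps : Set.MapsTo f (Set.Icc 0 1) (Set.Icc 0 1))
    (hinj : Set.InjOn f (Set.Icc 0 1))
    (hleft : ∀ t ∈ Set.Icc (0 : ℝ) 1, finv (f t) = t)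
    (hright : ∀ t ∈ Set.Icc (0 : ℝ) 1, f (finv t) = t)
    (hdf : DifferentiableOn ℝ f (Set.Icc 0 1))
    (hdfinv : DifferentiableOn ℝ finv (Set.Icc 0 1))
    (hidx : ∀ A ⊆ Set.Icc (0 : ℝ) 1, JordanMeasurable1 A →
      idxSet1 x A = jordanMeasure1 (Set.Icc 0 1 ∩ f ⁻¹' A)) :
    ∀ I ⊆ Set.Icc (0 : ℝ) 1, I.OrdConnected →
      HasDensity1 {n | x n ∈ I} (jordanMeasure1 (Set.Icc 0 1 ∩ f ⁻¹' I)) :=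
  density_on_intervals_general x f hmaps hinj hdf hidx
end
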